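/- For all z ∈ D: if Φ^D_z ≠ ∅ then h^ρ_D(z) = ŝ_D(z) < max(z); if Φ^D_z = ∅ then h^ρ_D(z) = ρ_D(z) and ŝ_D(z) = max(z). In particular, the set Φ^D_z is the same whether computed via ŝ_D or via h^ρ_D. -/
import Mathlib


open Finset
open scoped Classical

/-- The maximum coordinate of a tuple in `ℕ^k`. -/
def maxv {k : ℕ} (x : Fin k → ℕ) : ℕ := Finset.univ.sup x

/-- The minimum coordinate of a tuple in `ℕ^k`. -/
noncomputable def minv {k : ℕ} (x : Fin k → ℕ) : ℕ := sInf (Set.range x)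

/-- Order equivalence of tuples: `x ot y` iff the strict-order and equality
patterns of coordinates agree. -/
def OT {k : ℕ} (x y : Fin k → ℕ) : Prop :=
  ∀ i j : Fin k, (x i < x j ↔ y i < y j) ∧ (x i = x j ↔ y i = y j)

/-- A downward directed lattice graph: every edge strictly decreases the max norm. -/
def Downward {k : ℕ} (Θ : Set ((Fin k → ℕ) × (Fin k → ℕ))) : Prop :=
  ∀ e ∈ Θ, maxv e.2 < maxv e.1

/-- A partial selection function: whenever defined, its value is one of the
reported values `n_i`. -/
def PartialSelection {k r : ℕ}
    (F : (Fin k → ℕ) → (Fin r → (Fin k → ℕ) × ℕ) → Option ℕ) : Prop :=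
  ∀ x ys n, F x ys = some n → ∃ i, n = (ys i).2

/-- `Φ` is the family of sets `Φ^D_z` of defined values of `F` at `z`, where the
reported value of a subordinate `y_i ∈ G^z_D` is `f y_i` if `Φ y_i ≠ ∅` and
`min(y_i)` otherwise. -/
def PhiSpec {k r : ℕ} (Θ : Set ((Fin k → ℕ) × (Fin k → ℕ)))
    (F : (Fin k → ℕ) → (Fin r → (Fin k → ℕ) × ℕ) → Option ℕ)
    (D : Set (Fin k → ℕ)) (f : (Fin k → ℕ) → ℕ)
    (Φ : (Fin k → ℕ) → Set ℕ) : Prop :=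
  ∀ z, Φ z = {n | ∃ ys : Fin r → (Fin k → ℕ) × ℕ,
      (∀ i, (ys i).1 ∈ D ∧ (z, (ys i).1) ∈ Θ) ∧
      (∀ i, (ys i).2 = if Φ ((ys i).1) = ∅ then minv ((ys i).1) else f ((ys i).1)) ∧
      F z ys = some n}

/-- `f` (with associated sets `Φ`) is the committee-model function on `D` with
base value `base z` when `Φ z = ∅`, and `min (Φ z)` otherwise. -/
def CommitteeModel {k r : ℕ} (Θ : Set ((Fin k → ℕ) × (Fin k → ℕ)))
    (F : (Fin k → ℕ) → (Fin r → (Fin k → ℕ) × ℕ) → Option ℕ)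
    (D : Set (Fin k → ℕ)) (base : (Fin k → ℕ) → ℕ)
    (f : (Fin k → ℕ) → ℕ) (Φ : (Fin k → ℕ) → Set ℕ) : Prop :=
  PhiSpec Θ F D f Φ ∧
  ∀ z ∈ D, (Φ z = ∅ → f z = base z) ∧ (Φ z ≠ ∅ → f z = sInf (Φ z))

/-- `f` is regressively regular over `E`: on each order type class of `E^k`,
either `f` is constant with value `< min E`, or `f x ≥ min x` throughout. -/
def RegReg {k : ℕ} (f : (Fin k → ℕ) → ℕ) (E : Finset ℕ) : Prop :=
  ∀ x : Fin k → ℕ, (∀ i, x i ∈ E) →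
    ((∀ y : Fin k → ℕ, (∀ i, y i ∈ E) → OT x y → f y = f x) ∧ f x < sInf (E : Set ℕ)) ∨
    (∀ y : Fin k → ℕ, (∀ i, y i ∈ E) → OT x y → minv y ≤ f y)

lemma minv_le_maxv {k : ℕ} (hk : 1 ≤ k) (x : Fin k → ℕ) : minv x ≤ maxv x := by
  have h0 : (⟨0, hk⟩ : Fin k) = ⟨0, hk⟩ := rfl
  calc minv x ≤ x ⟨0, hk⟩ := Nat.sInf_le ⟨⟨0, hk⟩, rfl⟩
    _ ≤ maxv x := Finset.le_sup (Finset.mem_univ _)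

/-- comparison of `ŝ_D` and `h^ρ_D`: they agree (and are `< max z`)
where `Φ^D_z ≠ ∅`; otherwise `h^ρ_D z = ρ_D z` and `ŝ_D z = max z`; and the sets
`Φ^D_z` are the same whether computed via `ŝ_D` or `h^ρ_D`. -/
theorem shat_vs_h (k r : ℕ) (hk : 2 ≤ k) (hr : 1 ≤ r)
    (Θ : Set ((Fin k → ℕ) × (Fin k → ℕ))) (hΘ : Downward Θ)
    (F : (Fin k → ℕ) → (Fin r → (Fin k → ℕ) × ℕ) → Option ℕ)
    (hF : PartialSelection F)
    (D : Set (Fin k → ℕ)) (hD : D.Finite)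
    (ρ : (Fin k → ℕ) → ℕ) (hρ : ∀ z ∈ D, minv z ≤ ρ z)
    (s h : (Fin k → ℕ) → ℕ) (Φs Φh : (Fin k → ℕ) → Set ℕ)
    (hms : CommitteeModel Θ F D maxv s Φs)
    (hmh : CommitteeModel Θ F D ρ h Φh) :
    (∀ z ∈ D, Φs z = Φh z) ∧
    ∀ z ∈ D, (Φh z ≠ ∅ → h z = s z ∧ s z < maxv z) ∧
      (Φh z = ∅ → h z = ρ z ∧ s z = maxv z) := by
  have hk1 : 1 ≤ k := le_trans (by norm_num) hk
  obtain ⟨hPs, hcs⟩ := hms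
  obtain ⟨hPh, hch⟩ := hmh
  -- key induction
  have key : ∀ m : ℕ, ∀ z, z ∈ D → maxv z = m →
      Φs z = Φh z ∧ ∀ n ∈ Φs z, n < maxv z := by
    intro m
    induction m using Nat.strong_induction_on with
    | _ m ih =>
    intro z hz hm
    -- subordinate facts
    have hsub : ∀ y, y ∈ D → (z, y) ∈ Θ →
        (Φs y = Φh y ∧ ∀ n ∈ Φs y, n < maxv y) := by
      intro y hyD hyΘ
      have hlt : maxv y < m := hm ▸ hΘ (z, y) hyΘ
      exact ih (maxv y) hlt y hyD rfl
    -- the reported values agree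
    have hval : ∀ y, y ∈ D → (z, y) ∈ Θ →
        ((if Φs y = ∅ then minv y else s y) = (if Φh y = ∅ then minv y else h y)) := by
      intro y hyD hyΘ
      obtain ⟨heq, _⟩ := hsub y hyD hyΘ
      rw [heq]
      by_cases hE : Φh y = ∅
      · simp [hE]
      · simp only [hE, if_neg hE, if_false]
        rw [(hcs y hyD).2 (heq ▸ hE), (hch y hyD).2 hE, heq]
    constructor
    · ext n
      rw [hPs z, hPh z]
      constructor
      · rintro ⟨ys, h1, h2, h3⟩
        refine ⟨ys, h1, fun i => ?_, h3⟩
        rw [h2 i, hval _ (h1 i).1 (h1 i).2]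
      · rintro ⟨ys, h1, h2, h3⟩
        refine ⟨ys, h1, fun i => ?_, h3⟩
        rw [h2 i, ← hval _ (h1 i).1 (h1 i).2]
    · intro n hn
      rw [hPs z] at hn
      obtain ⟨ys, h1, h2, h3⟩ := hn
      obtain ⟨i, hi⟩ := hF z ys n h3
      have hyD := (h1 i).1
      have hyΘ := (h1 i).2
      have hlt : maxv (ys i).1 < maxv z := hΘ (z, (ys i).1) hyΘ
      rw [hi, h2 i]
      by_cases hE : Φs (ys i).1 = ∅
      · rw [if_pos hE]
        exact lt_of_le_of_lt (minv_le_maxv hk1 _) hlt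
      · rw [if_neg hE]
        obtain ⟨n', hn'⟩ := Set.nonempty_iff_ne_empty.2 hE
        have hb := (hsub _ hyD hyΘ).2 n' hn'
        calc s (ys i).1 = sInf (Φs (ys i).1) := (hcs _ hyD).2 hE
          _ ≤ n' := Nat.sInf_le hn'
          _ < maxv (ys i).1 := hb
          _ < maxv z := hlt
  have keyz : ∀ z ∈ D, Φs z = Φh z ∧ ∀ n ∈ Φs z, n < maxv z :=
    fun z hz => key (maxv z) z hz rfl
  refine ⟨fun z hz => (keyz z hz).1, fun z hz => ⟨?_, ?_⟩⟩
  · intro hne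
    have heq := (keyz z hz).1
    have hse : Φs z ≠ ∅ := heq ▸ hne
    have hs : s z = sInf (Φs z) := (hcs z hz).2 hse
    have hh : h z = sInf (Φh z) := (hch z hz).2 hne
    obtain ⟨n', hn'⟩ := Set.nonempty_iff_ne_empty.2 hse
    refine ⟨by rw [hs, hh, heq], ?_⟩
    calc s z = sInf (Φs z) := hs
      _ ≤ n' := Nat.sInf_le hn'
      _ < maxv z := (keyz z hz).2 n' hn'
  · intro hE
    have heq := (keyz z hz).1
    exact ⟨(hch z hz).1 hE, (hcs z hz).1 (heq ▸ hE)⟩
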